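/- Suppose R(Cᵀ) ⊆ R(Aᵀ), R(B) ⊆ R(A), and R((A†B)ᵀ) ⊆ R(Fᵀ), where F = D - CA†B. Then MXM = M, where X = [[A† + A†BF†CA†, -A†BF†],[-F†CA†, F†]] and M = [[A,B],[C,D]]. -/

import Mathlib

/-!
From `R(B) ⊆ R(A)` and `R(Cᵀ) ⊆ R(Aᵀ)` we get `A A† B = B` and `C A† A = C`, so `M` has the
block factorization `M = L · diag(A, F) · U` with `L`, `U` unit block-triangular, exactly as when
`A` is invertible. The matrix `X` is `U⁻¹ · diag(A†, F†) · L⁻¹`, and conjugating an inner inverse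
of the middle factor by the inverses of the outer factors gives an inner inverse of `M`.
-/

open Matrix LinearMap

/-- `X` is the Moore-Penrose inverse of `A`. -/
def IsMoorePenrose {α β : Type*} [Fintype α] [Fintype β] [DecidableEq α] [DecidableEq β]
    (A : Matrix α β ℝ) (X : Matrix β α ℝ) : Prop :=
  A * X * A = A ∧ X * A * X = X ∧ (A * X)ᵀ = A * X ∧ (X * A)ᵀ = X * A

namespace Matrix

variable {R : Type*} {l m n o : Type*} [Fintype m] [Fintype n] [Fintype o]

section InnerInverse

variable [Semiring R]

def IsInnerInverse (A : Matrix m n R) (X : Matrix n m R) : Prop :=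
  A * X * A = A

theorem IsInnerInverse.fromBlocks_zero [Fintype l] {A : Matrix m n R}
    {X : Matrix n m R} {D : Matrix l o R} {Y : Matrix o l R} (hA : IsInnerInverse A X)
    (hD : IsInnerInverse D Y) : IsInnerInverse (fromBlocks A 0 0 D) (fromBlocks X 0 0 Y) := by
  simp only [IsInnerInverse, fromBlocks_multiply, Matrix.mul_zero, Matrix.zero_mul, add_zero,
    zero_add]
  rw [hA, hD]

theorem IsInnerInverse.mul_mul [Fintype l] [DecidableEq m] [DecidableEq n] {A : Matrix m n R}
    {X : Matrix n m R} {L : Matrix l m R} {L' : Matrix m l R} {P : Matrix n o R}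
    {P' : Matrix o n R} (h : IsInnerInverse A X) (hL : L' * L = 1) (hP : P * P' = 1) :
    IsInnerInverse (L * A * P) (P' * X * L') :=
  calc L * A * P * (P' * X * L') * (L * A * P)
      = L * (A * (P * P') * X * (L' * L) * A) * P := by simp only [Matrix.mul_assoc]
    _ = L * A * P := by rw [hP, hL, Matrix.mul_one, Matrix.mul_one, h]

end InnerInverse

section Range

variable [CommSemiring R] {A : Matrix m n R} {Ad : Matrix n m R}

theorem mul_mul_eq_of_range_mulVecLin_le {B : Matrix m o R} (hA : A * Ad * A = A)
    (h : range B.mulVecLin ≤ range A.mulVecLin) : A * Ad * B = B := by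
  refine ext_iff_mulVec.2 fun x => ?_
  obtain ⟨y, hy⟩ := h ⟨x, rfl⟩
  rw [mulVecLin_apply, mulVecLin_apply] at hy
  rw [← mulVec_mulVec, ← hy, mulVec_mulVec, hA]

theorem mul_mul_eq_of_range_mulVecLin_transpose_le {C : Matrix o n R} (hA : A * Ad * A = A)
    (h : range Cᵀ.mulVecLin ≤ range Aᵀ.mulVecLin) : C * Ad * A = C := by
  have hAt : Aᵀ * Adᵀ * Aᵀ = Aᵀ := by
    rw [← transpose_mul, ← transpose_mul, ← Matrix.mul_assoc, hA]
  simpa only [transpose_mul, transpose_transpose, Matrix.mul_assoc] using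
    congrArg transpose (mul_mul_eq_of_range_mulVecLin_le hAt h)

end Range

section BlockFactorization

variable [Ring R] [Fintype l] [DecidableEq l] [DecidableEq m] [DecidableEq n]
  [DecidableEq o] (A : Matrix m n R) (B : Matrix m o R) (C : Matrix l n R) (D : Matrix l o R)
  (Ad : Matrix n m R)

theorem fromBlocks_eq_of_mul_mul_eq₁₁ (hB : A * Ad * B = B) (hC : C * Ad * A = C) :
    fromBlocks A B C D =
      fromBlocks (1 : Matrix m m R) 0 (C * Ad) (1 : Matrix l l R) *
        fromBlocks A 0 0 (D - C * Ad * B) *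
        fromBlocks (1 : Matrix n n R) (Ad * B) 0 (1 : Matrix o o R) := by
  rw [Matrix.mul_assoc] at hB hC
  simp [fromBlocks_multiply, Matrix.mul_assoc, hB, hC]

theorem mul_fromBlocks_zero_mul_eq (Fd : Matrix o l R) :
    fromBlocks (1 : Matrix n n R) (-(Ad * B)) 0 (1 : Matrix o o R) * fromBlocks Ad 0 0 Fd *
        fromBlocks (1 : Matrix m m R) 0 (-(C * Ad)) (1 : Matrix l l R) =
      fromBlocks (Ad + Ad * B * Fd * C * Ad) (-(Ad * B * Fd)) (-(Fd * C * Ad)) Fd := by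
  simp [fromBlocks_multiply, Matrix.mul_assoc]

end BlockFactorization

end Matrix

theorem stmt15_general
    {m n s p : ℕ}
    (A : Matrix (Fin m) (Fin n) ℝ) (B : Matrix (Fin m) (Fin p) ℝ)
    (C : Matrix (Fin s) (Fin n) ℝ) (D : Matrix (Fin s) (Fin p) ℝ)
    (Ad : Matrix (Fin n) (Fin m) ℝ) (hA : IsMoorePenrose A Ad)
    (Fd : Matrix (Fin p) (Fin s) ℝ) (hF : IsMoorePenrose (D - C * Ad * B) Fd)
    (hCt : LinearMap.range (Matrix.mulVecLin (Cᵀ)) ≤ LinearMap.range (Matrix.mulVecLin (Aᵀ)))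
    (hB : LinearMap.range (Matrix.mulVecLin (B)) ≤ LinearMap.range (Matrix.mulVecLin (A))) :
    Matrix.fromBlocks A B C D *
      Matrix.fromBlocks (Ad + Ad * B * Fd * C * Ad) (-(Ad * B * Fd)) (-(Fd * C * Ad)) Fd *
      Matrix.fromBlocks A B C D = Matrix.fromBlocks A B C D := by
  have hAB : A * Ad * B = B := mul_mul_eq_of_range_mulVecLin_le hA.1 hB
  have hCA : C * Ad * A = C := mul_mul_eq_of_range_mulVecLin_transpose_le hA.1 hCt
  rw [fromBlocks_eq_of_mul_mul_eq₁₁ A B C D Ad hAB hCA, ← mul_fromBlocks_zero_mul_eq]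
  exact (IsInnerInverse.fromBlocks_zero hA.1 hF.1).mul_mul
    (by simp [fromBlocks_multiply]) (by simp [fromBlocks_multiply])

theorem stmt15
    {m n s p : ℕ}
    (A : Matrix (Fin m) (Fin n) ℝ) (B : Matrix (Fin m) (Fin p) ℝ)
    (C : Matrix (Fin s) (Fin n) ℝ) (D : Matrix (Fin s) (Fin p) ℝ)
    (Ad : Matrix (Fin n) (Fin m) ℝ) (hA : IsMoorePenrose A Ad)
    (Fd : Matrix (Fin p) (Fin s) ℝ) (hF : IsMoorePenrose (D - C * Ad * B) Fd)
    (hCt : LinearMap.range (Matrix.mulVecLin (Cᵀ)) ≤ LinearMap.range (Matrix.mulVecLin (Aᵀ)))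
    (hB : LinearMap.range (Matrix.mulVecLin (B)) ≤ LinearMap.range (Matrix.mulVecLin (A)))
    (hAB : LinearMap.range (Matrix.mulVecLin ((Ad * B)ᵀ)) ≤ LinearMap.range (Matrix.mulVecLin ((D - C * Ad * B)ᵀ))) :
    Matrix.fromBlocks A B C D *
      Matrix.fromBlocks (Ad + Ad * B * Fd * C * Ad) (-(Ad * B * Fd)) (-(Fd * C * Ad)) Fd *
      Matrix.fromBlocks A B C D = Matrix.fromBlocks A B C D :=
  stmt15_general A B C D Ad hA Fd hF hCt hB
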